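/- arXiv:2508.13749 — 3 statements merged into one kernel-verified Lean document; each statement's English description precedes it below -/
import Mathlib

section
/- The Efron–Stein inequality: if X₁,…,Xₙ are independent random variables, X₁',…,Xₙ' are independent copies, f is square-integrable, and f^{(i)} = f(X₁,…,X_{i−1},X_i',X_{i+1},…,Xₙ), then Var(f(X₁,…,Xₙ)) ≤ (1/2)·Σ_{i=1}^n E[(f − f^{(i)})²]. -/
open MeasureTheory ProbabilityTheory

/-!
Induction on the number of coordinates. Write a point of the product space as `(a, w)`, with
`a` its first coordinate. The law of total variance on a product gives
`Var f = E_a[Var_w f(a, ·)] + Var_a(E_w f(a, ·))`. The induction hypothesis, applied to each slice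
`f(a, ·)`, bounds the first term by the Efron–Stein terms of the coordinates `i ≥ 1`. For the
second, `Var F = ½ E[(F a - F a')²]` with `a'` an independent copy of `a`, and Jensen's inequality
in `w` bounds this by `½ E[(f(a, w) - f(a', w))²]`, the term of the coordinate `0`.
Independence turns the statement about `X` and `X'` into this one on product measures, as
`(X, X')` has law `(⊗ᵢ νᵢ) ⊗ (⊗ᵢ νᵢ)`.
-/

open Function

namespace MeasureTheory

section Product

variable {α β : Type*} [MeasurableSpace α] [MeasurableSpace β] {μ : Measure α} {ν : Measure β}

lemma sq_integral_le_integral_sq [IsProbabilityMeasure μ] {g : α → ℝ} (hg : MemLp g 2 μ) :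
    (∫ a, g a ∂μ) ^ 2 ≤ ∫ a, g a ^ 2 ∂μ := by
  have h := variance_nonneg g μ
  rw [variance_eq_sub hg] at h
  simp only [Pi.pow_apply] at h
  linarith

lemma memLp_two_prod_right_ae [SFinite μ] [SFinite ν] {g : α × β → ℝ}
    (hg : MemLp g 2 (μ.prod ν)) :
    ∀ᵐ a ∂μ, MemLp (fun b => g (a, b)) 2 ν := by
  filter_upwards [hg.integrable_sq.prod_right_ae, hg.aestronglyMeasurable.prodMk_left]
    with a hint hmeas
  exact (memLp_two_iff_integrable_sq hmeas).2 hint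

lemma memLp_two_integral_prod_left [IsFiniteMeasure μ] [IsProbabilityMeasure ν]
    {g : α × β → ℝ} (hg : MemLp g 2 (μ.prod ν)) :
    MemLp (fun a => ∫ b, g (a, b) ∂ν) 2 μ := by
  have hF := (hg.integrable one_le_two).integral_prod_left
  refine (memLp_two_iff_integrable_sq hF.aestronglyMeasurable).2 <|
    hg.integrable_sq.integral_prod_left.mono' (hF.aestronglyMeasurable.pow 2) ?_
  filter_upwards [memLp_two_prod_right_ae hg] with a ha
  rw [Real.norm_of_nonneg (sq_nonneg _)]
  exact sq_integral_le_integral_sq ha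

end Product

lemma measurePreserving_update {ι : Type*} [Fintype ι] [DecidableEq ι] {X : ι → Type*}
    [∀ i, MeasurableSpace (X i)] (ν : ∀ i, Measure (X i)) [∀ i, IsProbabilityMeasure (ν i)]
    (i : ι) :
    MeasurePreserving (fun p : (∀ j, X j) × X i => update p.1 i p.2)
      ((Measure.pi ν).prod (ν i)) (Measure.pi ν) := by
  refine ⟨measurable_update', (Measure.pi_eq fun s hs => ?_).symm⟩
  have hpre : (fun p : (∀ j, X j) × X i => update p.1 i p.2) ⁻¹' Set.univ.pi s =
      Set.univ.pi (update s i Set.univ) ×ˢ s i := by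
    ext ⟨x, y⟩
    simp only [Set.mem_preimage, Set.mem_univ_pi, Set.mem_prod]
    constructor
    · intro h
      refine ⟨fun j => ?_, by simpa using h i⟩
      rcases eq_or_ne j i with rfl | hj
      · simp
      · simpa [hj] using h j
    · rintro ⟨hx, hy⟩ j
      rcases eq_or_ne j i with rfl | hj
      · simpa using hy
      · simpa [hj] using hx j
  rw [Measure.map_apply measurable_update' (.univ_pi hs), hpre, Measure.prod_prod,
    Measure.pi_pi, ← Finset.prod_erase_mul _ _ (Finset.mem_univ i), update_self, measure_univ,
    mul_one, ← Finset.prod_erase_mul _ (fun j => ν j (s j)) (Finset.mem_univ i)]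
  congr 1
  exact Finset.prod_congr rfl fun j hj => by rw [update_of_ne (Finset.ne_of_mem_erase hj)]

section PiFinCons

variable {𝒳 : Type*} [MeasurableSpace 𝒳] {k : ℕ}

def _root_.MeasurableEquiv.piFinCons (𝒳 : Type*) [MeasurableSpace 𝒳] (k : ℕ) :
    𝒳 × (Fin k → 𝒳) ≃ᵐ (Fin (k + 1) → 𝒳) :=
  (MeasurableEquiv.piFinSuccAbove (fun _ => 𝒳) 0).symm

@[simp]
lemma _root_.MeasurableEquiv.piFinCons_apply (q : 𝒳 × (Fin k → 𝒳)) :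
    MeasurableEquiv.piFinCons 𝒳 k q = Fin.cons q.1 q.2 :=
  Fin.insertNth_zero' q.1 q.2

lemma measurePreserving_piFinCons (ν : Fin (k + 1) → Measure 𝒳) [∀ i, SigmaFinite (ν i)] :
    MeasurePreserving (MeasurableEquiv.piFinCons 𝒳 k)
      ((ν 0).prod (Measure.pi fun j => ν j.succ)) (Measure.pi ν) := by
  have h := (measurePreserving_piFinSuccAbove ν 0).symm
  simp only [Fin.succAbove_zero] at h
  exact h

def _root_.MeasurableEquiv.piFinConsProdAssoc (𝒳 : Type*) [MeasurableSpace 𝒳] (k : ℕ) :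
    𝒳 × ((Fin k → 𝒳) × 𝒳) ≃ᵐ (Fin (k + 1) → 𝒳) × 𝒳 :=
  MeasurableEquiv.prodAssoc.symm.trans ((MeasurableEquiv.piFinCons 𝒳 k).prodCongr (.refl 𝒳))

@[simp]
lemma _root_.MeasurableEquiv.piFinConsProdAssoc_apply (r : 𝒳 × ((Fin k → 𝒳) × 𝒳)) :
    MeasurableEquiv.piFinConsProdAssoc 𝒳 k r = (Fin.cons r.1 r.2.1, r.2.2) :=
  Prod.ext (MeasurableEquiv.piFinCons_apply (r.1, r.2.1)) rfl

lemma measurePreserving_piFinConsProdAssoc (ν : Fin (k + 1) → Measure 𝒳)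
    [∀ i, SigmaFinite (ν i)] (μ : Measure 𝒳) [SFinite μ] :
    MeasurePreserving (MeasurableEquiv.piFinConsProdAssoc 𝒳 k)
      ((ν 0).prod ((Measure.pi fun j => ν j.succ).prod μ)) ((Measure.pi ν).prod μ) :=
  ((measurePreserving_piFinCons ν).prod (.id μ)).comp ((measurePreserving_prodAssoc _ _ _).symm _)

end PiFinCons

end MeasureTheory

namespace ProbabilityTheory

section Product

variable {α β : Type*} [MeasurableSpace α] [MeasurableSpace β] {μ : Measure α} {ν : Measure β}

lemma variance_eq_half_integral_sub_sq [IsProbabilityMeasure μ] {g : α → ℝ}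
    (hg : MemLp g 2 μ) :
    variance g μ = 1 / 2 * ∫ p, (g p.1 - g p.2) ^ 2 ∂(μ.prod μ) := by
  have hint := hg.integrable one_le_two
  have hmean : ∫ p, (g p.1 - g p.2) ∂(μ.prod μ) = 0 := by
    rw [integral_sub (hint.comp_fst μ) (hint.comp_snd μ), integral_fun_fst, integral_fun_snd]
    simp
  have h := variance_add_prod hg hg.neg
  simp only [Pi.neg_apply, ← sub_eq_add_neg, variance_neg] at h
  have hd : AEMeasurable (fun p : α × α => g p.1 - g p.2) (μ.prod μ) :=
    ((hg.comp_fst μ).sub (hg.comp_snd μ)).aemeasurable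
  rw [variance_of_integral_eq_zero hd hmean] at h
  linarith

variable [IsProbabilityMeasure μ] [IsProbabilityMeasure ν]

lemma variance_prod_eq_integral_variance_add_variance_integral {g : α × β → ℝ}
    (hg : MemLp g 2 (μ.prod ν)) :
    variance g (μ.prod ν) =
      ∫ a, variance (fun b => g (a, b)) ν ∂μ + variance (fun a => ∫ b, g (a, b) ∂ν) μ := by
  have hF := memLp_two_integral_prod_left hg
  have hslices : ∫ a, variance (fun b => g (a, b)) ν ∂μ =
      ∫ a, (∫ b, g (a, b) ^ 2 ∂ν - (∫ b, g (a, b) ∂ν) ^ 2) ∂μ := by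
    refine integral_congr_ae ?_
    filter_upwards [memLp_two_prod_right_ae hg] with a ha
    rw [variance_eq_sub ha]
    rfl
  rw [hslices, integral_sub hg.integrable_sq.integral_prod_left hF.integrable_sq,
    variance_eq_sub hg, variance_eq_sub hF, ← integral_prod _ hg.integrable_sq,
    ← integral_prod _ (hg.integrable one_le_two)]
  simp only [Pi.pow_apply]
  ring

lemma variance_integral_prod_le {g : α × β → ℝ} (hg : MemLp g 2 (μ.prod ν)) :
    variance (fun a => ∫ b, g (a, b) ∂ν) μ ≤
      1 / 2 * ∫ q, (g q.1 - g (q.2, q.1.2)) ^ 2 ∂((μ.prod ν).prod μ) := by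
  set F := fun a => ∫ b, g (a, b) ∂ν
  set H : (α × α) × β → ℝ := fun r => (g (r.1.1, r.2) - g (r.1.2, r.2)) ^ 2
  have hg₁ := hg.comp_measurePreserving (measurePreserving_fst.prod (.id ν) (μa := μ.prod μ))
  have hg₂ := hg.comp_measurePreserving (measurePreserving_snd.prod (.id ν) (μa := μ.prod μ))
  have hH : Integrable H ((μ.prod μ).prod ν) := (hg₁.sub hg₂).integrable_sq
  have hjensen : ∀ᵐ p ∂(μ.prod μ), (F p.1 - F p.2) ^ 2 ≤ ∫ b, H (p, b) ∂ν := by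
    filter_upwards [memLp_two_prod_right_ae hg₁, memLp_two_prod_right_ae hg₂] with p hp₁ hp₂
    have hdiff : F p.1 - F p.2 = ∫ b, (g (p.1, b) - g (p.2, b)) ∂ν :=
      (integral_sub (hp₁.integrable one_le_two) (hp₂.integrable one_le_two)).symm
    rw [hdiff]
    exact sq_integral_le_integral_sq (hp₁.sub hp₂)
  have hrearrange : ∫ r, H r ∂((μ.prod μ).prod ν) =
      ∫ q, (g q.1 - g (q.2, q.1.2)) ^ 2 ∂((μ.prod ν).prod μ) := by
    -- `((a, b), a') ↦ ((a, a'), b)`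
    let σ : (α × β) × α ≃ᵐ (α × α) × β :=
      (MeasurableEquiv.prodAssoc.trans
        ((MeasurableEquiv.refl α).prodCongr MeasurableEquiv.prodComm)).trans
        MeasurableEquiv.prodAssoc.symm
    have hσ : MeasurePreserving σ ((μ.prod ν).prod μ) ((μ.prod μ).prod ν) :=
      (measurePreserving_prodAssoc μ μ ν).symm _ |>.comp
        (((MeasurePreserving.id μ).prod Measure.measurePreserving_swap).comp
          (measurePreserving_prodAssoc μ ν μ))
    rw [← hσ.integral_comp']
    rfl
  have hF := memLp_two_integral_prod_left hg
  rw [variance_eq_half_integral_sub_sq hF, ← hrearrange, integral_prod _ hH]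
  gcongr 1 / 2 * ?_
  exact integral_mono_ae ((hF.comp_fst μ).sub (hF.comp_snd μ)).integrable_sq
    hH.integral_prod_left hjensen

lemma variance_prod_le {g : α × β → ℝ} (hg : MemLp g 2 (μ.prod ν)) :
    variance g (μ.prod ν) ≤ ∫ a, variance (fun b => g (a, b)) ν ∂μ +
      1 / 2 * ∫ q, (g q.1 - g (q.2, q.1.2)) ^ 2 ∂((μ.prod ν).prod μ) := by
  rw [variance_prod_eq_integral_variance_add_variance_integral hg]
  gcongr
  exact variance_integral_prod_le hg

end Product

section FiniteProduct

variable {𝒳 : Type*} [MeasurableSpace 𝒳]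

/-- The term `E[(f - f⁽ⁱ⁾)²]` of the Efron–Stein bound, computed on the product space. -/
noncomputable def efronSteinTerm {ι : Type*} [Fintype ι] [DecidableEq ι] (f : (ι → 𝒳) → ℝ)
    (ν : ι → Measure 𝒳) (i : ι) : ℝ :=
  ∫ p, (f p.1 - f (update p.1 i p.2)) ^ 2 ∂((Measure.pi ν).prod (ν i))

lemma integrable_sub_update_sq {ι : Type*} [Fintype ι] [DecidableEq ι] {ν : ι → Measure 𝒳}
    [∀ i, IsProbabilityMeasure (ν i)] {f : (ι → 𝒳) → ℝ} (hf : MemLp f 2 (Measure.pi ν))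
    (i : ι) :
    Integrable (fun p : (ι → 𝒳) × 𝒳 => (f p.1 - f (update p.1 i p.2)) ^ 2)
      ((Measure.pi ν).prod (ν i)) :=
  ((hf.comp_measurePreserving measurePreserving_fst).sub
    (hf.comp_measurePreserving (measurePreserving_update ν i))).integrable_sq

variable {k : ℕ}

lemma efronSteinTerm_zero_eq_integral_cons (ν : Fin (k + 1) → Measure 𝒳)
    [∀ i, SigmaFinite (ν i)] (f : (Fin (k + 1) → 𝒳) → ℝ) :
    efronSteinTerm f ν 0 = ∫ q, (f (Fin.cons q.1.1 q.1.2) - f (Fin.cons q.2 q.1.2)) ^ 2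
      ∂(((ν 0).prod (Measure.pi fun j => ν j.succ)).prod (ν 0)) := by
  have hΨ := (measurePreserving_piFinCons ν).prod (MeasurePreserving.id (ν 0))
  rw [efronSteinTerm, ← hΨ.integral_comp
    ((MeasurableEquiv.piFinCons 𝒳 k).measurableEmbedding.prodMap MeasurableEmbedding.id)]
  simp [Fin.update_cons_zero]

lemma integrable_cons_sub_update_sq {ν : Fin (k + 1) → Measure 𝒳}
    [∀ i, IsProbabilityMeasure (ν i)] {f : (Fin (k + 1) → 𝒳) → ℝ}
    (hf : MemLp f 2 (Measure.pi ν)) (j : Fin k) :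
    Integrable (fun r : 𝒳 × ((Fin k → 𝒳) × 𝒳) =>
        (f (Fin.cons r.1 r.2.1) - f (Fin.cons r.1 (update r.2.1 j r.2.2))) ^ 2)
      ((ν 0).prod ((Measure.pi fun j => ν j.succ).prod (ν j.succ))) := by
  have h := ((measurePreserving_piFinConsProdAssoc ν (ν j.succ)).integrable_comp_emb
    (MeasurableEquiv.measurableEmbedding _)).2 (integrable_sub_update_sq hf j.succ)
  simpa [Function.comp_def, Fin.cons_update] using h

lemma integral_efronSteinTerm_cons {ν : Fin (k + 1) → Measure 𝒳}
    [∀ i, IsProbabilityMeasure (ν i)] {f : (Fin (k + 1) → 𝒳) → ℝ}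
    (hf : MemLp f 2 (Measure.pi ν)) (j : Fin k) :
    ∫ a, efronSteinTerm (fun w => f (Fin.cons a w)) (fun j => ν j.succ) j ∂(ν 0) =
      efronSteinTerm f ν j.succ := by
  simp only [efronSteinTerm]
  rw [← integral_prod _ (integrable_cons_sub_update_sq hf j),
    ← (measurePreserving_piFinConsProdAssoc ν (ν j.succ)).integral_comp']
  simp [Fin.cons_update]

theorem variance_pi_le_half_sum_efronSteinTerm :
    ∀ {n : ℕ} (ν : Fin n → Measure 𝒳) [∀ i, IsProbabilityMeasure (ν i)]
      {f : (Fin n → 𝒳) → ℝ}, MemLp f 2 (Measure.pi ν) →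
      variance f (Measure.pi ν) ≤ 1 / 2 * ∑ i, efronSteinTerm f ν i
  | 0, ν, _, f, _ => by
    have hconst : f = fun _ => f finZeroElim :=
      funext fun x => congrArg f (Subsingleton.elim _ _)
    rw [hconst, variance_eq_sub (memLp_const _)]
    simp
  | k + 1, ν, _, f, hf => by
    set ν' := fun j : Fin k => ν j.succ
    set h : 𝒳 × (Fin k → 𝒳) → ℝ := fun q => f (Fin.cons q.1 q.2)
    have hcons := measurePreserving_piFinCons ν
    have hh : MemLp h 2 ((ν 0).prod (Measure.pi ν')) := by
      simpa [Function.comp_def] using hf.comp_measurePreserving hcons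
    have hvar : variance f (Measure.pi ν) = variance h ((ν 0).prod (Measure.pi ν')) := by
      simpa using (hcons.variance_fun_comp hf.aemeasurable).symm
    have hslices : ∫ a, variance (fun w => h (a, w)) (Measure.pi ν') ∂(ν 0) ≤
        1 / 2 * ∑ j : Fin k, efronSteinTerm f ν j.succ := by
      have hslice_int : ∀ j, Integrable
          (fun a => efronSteinTerm (fun w => f (Fin.cons a w)) ν' j) (ν 0) :=
        fun j => (integrable_cons_sub_update_sq hf j).integral_prod_left
      calc ∫ a, variance (fun w => h (a, w)) (Measure.pi ν') ∂(ν 0)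
          ≤ ∫ a, 1 / 2 * ∑ j, efronSteinTerm (fun w => f (Fin.cons a w)) ν' j ∂(ν 0) := by
            refine integral_mono_of_nonneg (ae_of_all _ fun a => variance_nonneg _ _)
              ((integrable_finsetSum _ fun j _ => hslice_int j).const_mul _) ?_
            filter_upwards [memLp_two_prod_right_ae hh] with a ha
            exact variance_pi_le_half_sum_efronSteinTerm ν' ha
        _ = 1 / 2 * ∑ j : Fin k, efronSteinTerm f ν j.succ := by
            rw [integral_const_mul, integral_finsetSum _ fun j _ => hslice_int j]
            exact congrArg _ (Finset.sum_congr rfl fun j _ => integral_efronSteinTerm_cons hf j)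
    calc variance f (Measure.pi ν)
        ≤ ∫ a, variance (fun w => h (a, w)) (Measure.pi ν') ∂(ν 0) +
          1 / 2 * ∫ q, (h q.1 - h (q.2, q.1.2)) ^ 2
            ∂(((ν 0).prod (Measure.pi ν')).prod (ν 0)) :=
          hvar ▸ variance_prod_le hh
      _ ≤ 1 / 2 * ∑ j : Fin k, efronSteinTerm f ν j.succ + 1 / 2 * efronSteinTerm f ν 0 := by
          rw [efronSteinTerm_zero_eq_integral_cons]
          gcongr
      _ = 1 / 2 * ∑ i, efronSteinTerm f ν i := by
          rw [Fin.sum_univ_succ]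
          ring

end FiniteProduct

lemma map_pi_prod_pi_eq_of_iIndepFun {Ω ι κ 𝒳 : Type*} [MeasurableSpace Ω]
    [MeasurableSpace 𝒳] [Fintype ι] [Fintype κ] {μ : Measure Ω} [IsProbabilityMeasure μ]
    {X : ι → Ω → 𝒳} {X' : κ → Ω → 𝒳} (hX : ∀ i, Measurable (X i))
    (hX' : ∀ j, Measurable (X' j)) (hindep : iIndepFun (Sum.elim X X') μ) :
    μ.map (fun ω => ((fun i => X i ω), fun j => X' j ω)) =
      (Measure.pi fun i => μ.map (X i)).prod (Measure.pi fun j => μ.map (X' j)) := by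
  have hY : ∀ s, Measurable (Sum.elim X X' s) := Sum.forall.2 ⟨hX, hX'⟩
  have hcomp : (fun ω => ((fun i => X i ω), fun j => X' j ω)) =
      MeasurableEquiv.sumPiEquivProdPi (fun _ => 𝒳) ∘ fun ω s => Sum.elim X X' s ω := rfl
  rw [hcomp, ← Measure.map_map (MeasurableEquiv.measurable _) (measurable_pi_lambda _ hY),
    hindep.map_fun_eq_pi_map fun s => (hY s).aemeasurable,
    (measurePreserving_sumPiEquivProdPi _).map_eq]
  rfl

end ProbabilityTheory

/-- Efron–Stein inequality: for independent `X₁,…,Xₙ` with independent copies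
`X₁',…,Xₙ'` (all `2n` variables jointly independent, `Xᵢ'` distributed as `Xᵢ`),
and a square-integrable `f`,
`Var(f(X)) ≤ (1/2) ∑ᵢ E[(f(X) − f^{(i)})²]` where `f^{(i)}` replaces the `i`-th
coordinate by `Xᵢ'`. -/
theorem stmt1 {Ω 𝒳 : Type*} [MeasureSpace Ω] [IsProbabilityMeasure (ℙ : Measure Ω)]
    [MeasurableSpace 𝒳] {n : ℕ}
    (X X' : Fin n → Ω → 𝒳)
    (hmeas : ∀ i, Measurable (X i)) (hmeas' : ∀ i, Measurable (X' i))
    (hindep : iIndepFun (Sum.elim X X') ℙ)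
    (hcopy : ∀ i, Measure.map (X' i) ℙ = Measure.map (X i) ℙ)
    (f : (Fin n → 𝒳) → ℝ)
    (hfmeas : Measurable f)
    (hf : MemLp (fun ω => f (fun j => X j ω)) 2 ℙ) :
    variance (fun ω => f (fun j => X j ω)) ℙ ≤
      (1 / 2) * ∑ i : Fin n,
        ∫ ω, (f (fun j => X j ω)
            - f (Function.update (fun j => X j ω) i (X' i ω))) ^ 2 ∂ℙ := by
  set ν := fun i => (ℙ : Measure Ω).map (X i)
  have hν : ∀ i, IsProbabilityMeasure (ν i) :=
    fun i => Measure.isProbabilityMeasure_map (hmeas i).aemeasurable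
  have hlaw : MeasurePreserving (fun ω => ((fun j => X j ω), fun j => X' j ω)) ℙ
      ((Measure.pi ν).prod (Measure.pi ν)) := by
    refine ⟨(measurable_pi_lambda _ hmeas).prodMk (measurable_pi_lambda _ hmeas'), ?_⟩
    rw [map_pi_prod_pi_eq_of_iIndepFun hmeas hmeas' hindep]
    simp_rw [hcopy]
    rfl
  have hX : MeasurePreserving (fun ω j => X j ω) ℙ (Measure.pi ν) :=
    measurePreserving_fst.comp hlaw
  have hfπ : MemLp f 2 (Measure.pi ν) := by
    rw [← hX.map_eq]
    exact (memLp_map_measure_iff hfmeas.aestronglyMeasurable hX.aemeasurable).2 hf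
  have hterm : ∀ i, ∫ ω, (f (fun j => X j ω)
      - f (Function.update (fun j => X j ω) i (X' i ω))) ^ 2 ∂ℙ = efronSteinTerm f ν i := by
    intro i
    have hXi : MeasurePreserving (fun ω => ((fun j => X j ω), X' i ω)) ℙ
        ((Measure.pi ν).prod (ν i)) :=
      ((MeasurePreserving.id _).prod (measurePreserving_eval ν i)).comp hlaw
    rw [efronSteinTerm, ← hXi.map_eq, integral_map hXi.aemeasurable
      (hXi.map_eq ▸ (integrable_sub_update_sq hfπ i).aestronglyMeasurable)]
  rw [hX.variance_fun_comp hfmeas.aemeasurable, Finset.sum_congr rfl fun i _ => hterm i]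
  exact variance_pi_le_half_sum_efronSteinTerm ν hfπ
end

section
/- Let Z be a standard normal random variable and let Φᶜ(t) = P(Z > t) denote its complementary CDF. Then for all t > 0: 1/(t + √(t² + 4)) < √(π/2)·exp(t²/2)·Φᶜ(t) < 1/(t + √(t² + 8/π)). -/
/-!
Write `F(t) = ∫_t^∞ e^{-x²/2} dx`. The middle term of the theorem is `e^{t²/2} F(t) / 2`, so the
bound against `1/(t + √(t² + c))` is the sign of `G_c(t) = F(t) - 2e^{-t²/2}/(t + √(t² + c))`.
Both terms of `G_c` tend to `0` at infinity, and `G_c'(t)` has the sign of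
`t√(t² + c) - (t² + c - 2)`, that is, for `t ≥ 0` and `c ≥ 2`, of `t²(4 - c) - (c - 2)²`.
For `c = 4` the gap is strictly decreasing on `[0, ∞)`, hence positive. For `c = 8/π` it
vanishes at `0` (because `F(0) = √(π/2)`), decreases while `t²(4 - c) < (c - 2)²` and then
increases towards its limit `0`, hence is negative on `(0, ∞)`.
-/

open Real MeasureTheory Set Filter Topology

noncomputable def gaussTail (t : ℝ) : ℝ := ∫ x in Ioi t, exp (-x ^ 2 / 2)

lemma integrable_exp_neg_sq_div_two : Integrable fun x : ℝ => exp (-x ^ 2 / 2) := by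
  simpa [neg_div, div_eq_inv_mul] using integrable_exp_neg_mul_sq (show (0 : ℝ) < 2⁻¹ by norm_num)

lemma gaussTail_eq_sub_intervalIntegral : gaussTail = fun t => gaussTail 0 - ∫ x in (0 : ℝ)..t, exp (-x ^ 2 / 2) := by
  ext t
  rw [gaussTail, gaussTail, ← intervalIntegral.integral_Ioi_sub_Ioi'
    integrable_exp_neg_sq_div_two.integrableOn integrable_exp_neg_sq_div_two.integrableOn]
  ring

lemma gaussTail_zero : gaussTail 0 = √(2 * π) / 2 := by
  rw [gaussTail]
  convert integral_gaussian_Ioi (1 / 2) using 4 with x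
  · ring
  · field_simp

lemma hasDerivAt_gaussTail (t : ℝ) : HasDerivAt gaussTail (-exp (-t ^ 2 / 2)) t := by
  have hint := intervalIntegral.integral_hasDerivAt_right
    integrable_exp_neg_sq_div_two.intervalIntegrable (a := 0) (b := t)
    integrable_exp_neg_sq_div_two.aestronglyMeasurable.stronglyMeasurableAtFilter
    (by fun_prop)
  rw [gaussTail_eq_sub_intervalIntegral]
  simpa using hint.const_sub (gaussTail 0)

lemma tendsto_gaussTail_atTop : Tendsto gaussTail atTop (𝓝 0) := by
  have h := intervalIntegral_tendsto_integral_Ioi 0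
    integrable_exp_neg_sq_div_two.integrableOn tendsto_id
  have hsub := h.const_sub (gaussTail 0)
  rw [← gaussTail, sub_self] at hsub
  rw [gaussTail_eq_sub_intervalIntegral]
  exact hsub

noncomputable def millsGap (c t : ℝ) : ℝ := gaussTail t - 2 * exp (-t ^ 2 / 2) / (t + √(t ^ 2 + c))

lemma add_sqrt_sq_add_pos {c : ℝ} (hc : 0 < c) (t : ℝ) : 0 < t + √(t ^ 2 + c) := by
  have h : |t| < √(t ^ 2 + c) := by
    rw [← sqrt_sq_eq_abs]
    exact sqrt_lt_sqrt (sq_nonneg t) (by linarith)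
  linarith [neg_abs_le t]

lemma hasDerivAt_millsGap {c : ℝ} (hc : 0 < c) (t : ℝ) :
    HasDerivAt (millsGap c)
      (-exp (-t ^ 2 / 2) * (t ^ 2 + c - 2 - t * √(t ^ 2 + c)) /
        (√(t ^ 2 + c) * (t + √(t ^ 2 + c)))) t := by
  have hq : 0 < t ^ 2 + c := by positivity
  have hr : HasDerivAt (fun x => √(x ^ 2 + c)) (2 * t / (2 * √(t ^ 2 + c))) t := by
    simpa using ((hasDerivAt_pow 2 t).add_const c).sqrt hq.ne'
  have he : HasDerivAt (fun x => exp (-x ^ 2 / 2)) (-t * exp (-t ^ 2 / 2)) t := by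
    have h : HasDerivAt (fun x : ℝ => -x ^ 2 / 2) (-t) t :=
      ((hasDerivAt_pow 2 t).fun_neg.div_const 2).congr_deriv (by push_cast; ring)
    simpa [mul_comm] using h.exp
  have hs := add_sqrt_sq_add_pos hc t
  refine ((hasDerivAt_gaussTail t).fun_sub
    ((he.const_mul 2).fun_div ((hasDerivAt_id' t).fun_add hr) hs.ne')).congr_deriv ?_
  field_simp
  linear_combination (-(t + √(t ^ 2 + c))) * sq_sqrt hq.le

lemma tendsto_millsGap_atTop (c : ℝ) : Tendsto (millsGap c) atTop (𝓝 0) := by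
  have hexp : Tendsto (fun t : ℝ => 2 * exp (-t ^ 2 / 2)) atTop (𝓝 (2 * 0)) := by
    have h := tendsto_neg_atTop_atBot.comp
      ((tendsto_pow_atTop (α := ℝ) two_ne_zero).atTop_div_const (two_pos (α := ℝ)))
    simpa [Function.comp_def, neg_div] using (tendsto_exp_atBot.comp h).const_mul 2
  have hden : Tendsto (fun t : ℝ => t + √(t ^ 2 + c)) atTop atTop :=
    tendsto_atTop_add_right_of_le _ 0 tendsto_id fun _ => sqrt_nonneg _
  have h := tendsto_gaussTail_atTop.sub (hexp.div_atTop hden)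
  rw [sub_zero] at h
  exact h

lemma mul_sqrt_sq_add_lt_iff {c x : ℝ} (hc : 2 ≤ c) (hx : 0 ≤ x) :
    x * √(x ^ 2 + c) < x ^ 2 + c - 2 ↔ x ^ 2 * (4 - c) < (c - 2) ^ 2 := by
  rw [← sq_lt_sq₀ (by positivity) (by nlinarith), mul_pow, sq_sqrt (by positivity)]
  constructor <;> intro h <;> nlinarith

lemma lt_mul_sqrt_sq_add_iff {c x : ℝ} (hc : 2 ≤ c) (hx : 0 ≤ x) :
    x ^ 2 + c - 2 < x * √(x ^ 2 + c) ↔ (c - 2) ^ 2 < x ^ 2 * (4 - c) := by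
  rw [← sq_lt_sq₀ (by nlinarith) (by positivity), mul_pow, sq_sqrt (by positivity)]
  constructor <;> intro h <;> nlinarith

lemma strictAntiOn_millsGap {c : ℝ} (hc : 0 < c) {D : Set ℝ} (hD : Convex ℝ D)
    (h : ∀ x ∈ interior D, x * √(x ^ 2 + c) < x ^ 2 + c - 2) : StrictAntiOn (millsGap c) D := by
  refine strictAntiOn_of_hasDerivWithinAt_neg hD
    (fun x _ => (hasDerivAt_millsGap hc x).continuousAt.continuousWithinAt)
    (fun x _ => (hasDerivAt_millsGap hc x).hasDerivWithinAt) fun x hx => ?_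
  exact div_neg_of_neg_of_pos
    (mul_neg_of_neg_of_pos (neg_neg_of_pos (exp_pos _)) (sub_pos.2 (h x hx)))
    (mul_pos (sqrt_pos.2 (by positivity)) (add_sqrt_sq_add_pos hc x))

lemma strictMonoOn_millsGap {c : ℝ} (hc : 0 < c) {D : Set ℝ} (hD : Convex ℝ D)
    (h : ∀ x ∈ interior D, x ^ 2 + c - 2 < x * √(x ^ 2 + c)) : StrictMonoOn (millsGap c) D := by
  refine strictMonoOn_of_hasDerivWithinAt_pos hD
    (fun x _ => (hasDerivAt_millsGap hc x).continuousAt.continuousWithinAt)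
    (fun x _ => (hasDerivAt_millsGap hc x).hasDerivWithinAt) fun x hx => ?_
  exact div_pos
    (mul_pos_of_neg_of_neg (neg_neg_of_pos (exp_pos _)) (sub_neg.2 (h x hx)))
    (mul_pos (sqrt_pos.2 (by positivity)) (add_sqrt_sq_add_pos hc x))

lemma StrictAntiOn.lt_of_tendsto_atTop {α β : Type*} [LinearOrder α] [NoMaxOrder α]
    [LinearOrder β] [TopologicalSpace β] [OrderClosedTopology β] {f : α → β} {a : α} {l : β}
    (hf : StrictAntiOn f (Ici a)) (hl : Tendsto f atTop (𝓝 l)) : l < f a := by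
  have : Nonempty α := ⟨a⟩
  obtain ⟨b, hab⟩ := exists_gt a
  refine lt_of_le_of_lt ?_ (hf self_mem_Ici hab.le hab)
  refine le_of_tendsto hl ?_
  filter_upwards [eventually_ge_atTop b] with x hx
  exact hf.antitoneOn hab.le (hab.le.trans hx) hx

lemma StrictMonoOn.lt_of_tendsto_atTop {α β : Type*} [LinearOrder α] [NoMaxOrder α]
    [LinearOrder β] [TopologicalSpace β] [OrderClosedTopology β] {f : α → β} {a : α} {l : β}
    (hf : StrictMonoOn f (Ici a)) (hl : Tendsto f atTop (𝓝 l)) : f a < l :=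
  StrictAntiOn.lt_of_tendsto_atTop (β := βᵒᵈ) hf hl

lemma millsGap_pos {c t : ℝ} (hc : 4 ≤ c) (ht : 0 ≤ t) : 0 < millsGap c t := by
  refine (strictAntiOn_millsGap (by linarith) (convex_Ici t) fun x hx => ?_).lt_of_tendsto_atTop
    (tendsto_millsGap_atTop c)
  rw [interior_Ici] at hx
  have hx0 : 0 ≤ x := ht.trans hx.out.le
  rw [mul_sqrt_sq_add_lt_iff (by linarith) hx0]
  nlinarith

lemma millsGap_neg {c t : ℝ} (hc2 : 2 ≤ c) (h0 : millsGap c 0 ≤ 0) (ht : 0 < t) :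
    millsGap c t < 0 := by
  rcases lt_or_ge (t ^ 2 * (4 - c)) ((c - 2) ^ 2) with hsmall | hlarge
  · have hanti := strictAntiOn_millsGap (c := c) (by linarith) (convex_Icc 0 t) fun x hx => by
      rw [interior_Icc] at hx
      rw [mul_sqrt_sq_add_lt_iff hc2 hx.1.le]
      nlinarith [hx.1, hx.2]
    exact (hanti (left_mem_Icc.2 ht.le) (right_mem_Icc.2 ht.le) ht).trans_le h0
  · refine (strictMonoOn_millsGap (by linarith) (convex_Ici t) fun x hx => ?_).lt_of_tendsto_atTop
      (tendsto_millsGap_atTop c)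
    rw [interior_Ici] at hx
    have hx0 : 0 ≤ x := ht.le.trans hx.out.le
    rw [lt_mul_sqrt_sq_add_iff hc2 hx0]
    nlinarith [hx.out]

lemma millsGap_eight_div_pi_zero : millsGap (8 / π) 0 = 0 := by
  have hprod : √(8 / π) * √(2 * π) = 4 := by
    rw [← sqrt_mul (by positivity), show 8 / π * (2 * π) = 4 ^ 2 by field_simp; ring,
      sqrt_sq (by norm_num)]
  have hpos : 0 < √(8 / π) := by positivity
  rw [millsGap, gaussTail_zero, sub_eq_zero]
  simp only [zero_pow two_ne_zero, neg_zero, zero_div, exp_zero, mul_one, zero_add]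
  rw [eq_div_iff hpos.ne']
  linear_combination hprod / 2

lemma two_le_eight_div_pi : 2 ≤ 8 / π := by
  rw [le_div_iff₀ pi_pos]
  linarith [pi_lt_four]

lemma exp_mul_millsGap (c t : ℝ) :
    exp (t ^ 2 / 2) / 2 * millsGap c t =
      exp (t ^ 2 / 2) * gaussTail t / 2 - 1 / (t + √(t ^ 2 + c)) := by
  have h : exp (t ^ 2 / 2) * exp (-t ^ 2 / 2) = 1 := by
    rw [← exp_add, neg_div, add_neg_cancel, exp_zero]
  rw [millsGap]
  linear_combination (-1 / (t + √(t ^ 2 + c))) * h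

/-- Two-sided Mills-ratio bounds for the standard normal tail
`Φᶜ(t) = (1/√(2π)) ∫_t^∞ e^{−x²/2} dx`, for `t > 0`. -/
theorem stmt8 (t : ℝ) (ht : 0 < t) :
    1 / (t + Real.sqrt (t ^ 2 + 4)) <
      Real.sqrt (π / 2) * Real.exp (t ^ 2 / 2) *
        ((1 / Real.sqrt (2 * π)) * ∫ x in Set.Ioi t, Real.exp (-x ^ 2 / 2)) ∧
    Real.sqrt (π / 2) * Real.exp (t ^ 2 / 2) *
        ((1 / Real.sqrt (2 * π)) * ∫ x in Set.Ioi t, Real.exp (-x ^ 2 / 2)) <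
      1 / (t + Real.sqrt (t ^ 2 + 8 / π)) := by
  have hsqrt : √(2 * π) = 2 * √(π / 2) := by
    rw [show 2 * π = 2 ^ 2 * (π / 2) by ring, sqrt_mul (by norm_num), sqrt_sq (by norm_num)]
  have hmiddle : √(π / 2) * exp (t ^ 2 / 2) * ((1 / √(2 * π)) * ∫ x in Ioi t, exp (-x ^ 2 / 2)) =
      exp (t ^ 2 / 2) * gaussTail t / 2 := by
    have : 0 < √(π / 2) := by positivity
    rw [hsqrt, gaussTail]
    field_simp
  have hscale : 0 < exp (t ^ 2 / 2) / 2 := by positivity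
  have hlower := mul_pos hscale (millsGap_pos le_rfl ht.le)
  have hupper := mul_neg_of_pos_of_neg hscale
    (millsGap_neg two_le_eight_div_pi millsGap_eight_div_pi_zero.le ht)
  rw [exp_mul_millsGap, sub_pos] at hlower
  rw [exp_mul_millsGap, sub_neg] at hupper
  rw [hmiddle]
  exact ⟨hlower, hupper⟩
end

section
/- Let X ~ Gamma(α, β) in shape–rate parametrization (density β^α·x^{α−1}·e^{−βx}/Γ(α)), with α > 1, β > 0. Then for any x > (α−1)/β: β^{α−1}·x^{α−1}·e^{−βx}/Γ(α) ≤ P(X ≥ x) ≤ β^α·x^{α−1}·e^{−βx}/(Γ(α)·(β − (α−1)/x)). -/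
/-!
Write `I_s(x) = ∫_x^∞ t^s e^{-bt} dt`. Integrating `d/dt (t^s e^{-bt})` over `(x, ∞)` gives
`b I_s(x) = x^s e^{-bx} + s I_{s-1}(x)`. For `s > 0` the last term is nonnegative, which gives the
lower bound `I_s(x) ≥ x^s e^{-bx} / b`, and it is at most `s I_s(x) / x` because `t ≥ x` on the
range of integration, which gives the upper bound `I_s(x) ≤ x^s e^{-bx} / (b - s/x)`.
The Gamma tail is `β^α / Γ(α) · I_{α-1}(x)`.
-/

open MeasureTheory ProbabilityTheory Real Set

lemma integrableOn_rpow_mul_exp_neg_mul_Ioi {s b x : ℝ} (hs : -1 < s) (hb : 0 < b)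
    (hx : 0 ≤ x) : IntegrableOn (fun t : ℝ => t ^ s * exp (-(b * t))) (Ioi x) := by
  refine IntegrableOn.mono_set ?_ (Ioi_subset_Ioi hx)
  simpa [rpow_one] using integrableOn_rpow_mul_exp_neg_mul_rpow hs zero_lt_one hb

lemma hasDerivAt_rpow_mul_exp_neg_mul (s b : ℝ) {t : ℝ} (ht : t ≠ 0) :
    HasDerivAt (fun t : ℝ => t ^ s * exp (-(b * t)))
      (s * (t ^ (s - 1) * exp (-(b * t))) - b * (t ^ s * exp (-(b * t)))) t := by
  have hexp : HasDerivAt (fun t : ℝ => exp (-(b * t))) (-b * exp (-(b * t))) t := by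
    simpa [mul_comm] using ((hasDerivAt_id t).const_mul b).neg.exp
  refine ((hasDerivAt_rpow_const (p := s) (Or.inl ht)).fun_mul hexp).congr_deriv ?_
  ring

lemma setIntegral_nonneg_rpow_mul_exp_neg_mul (s b : ℝ) {x : ℝ} (hx : 0 ≤ x) :
    0 ≤ ∫ t in Ioi x, t ^ s * exp (-(b * t)) :=
  setIntegral_nonneg measurableSet_Ioi fun t (ht : x < t) => by
    have : 0 ≤ t := hx.trans ht.le
    positivity

lemma mul_integral_Ioi_rpow_mul_exp_neg_mul {s b x : ℝ} (hs : 0 < s) (hb : 0 < b)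
    (hx : 0 < x) :
    b * ∫ t in Ioi x, t ^ s * exp (-(b * t)) =
      x ^ s * exp (-(b * x)) + s * ∫ t in Ioi x, t ^ (s - 1) * exp (-(b * t)) := by
  have hI := integrableOn_rpow_mul_exp_neg_mul_Ioi (by linarith) hb hx.le (s := s)
  have hJ := integrableOn_rpow_mul_exp_neg_mul_Ioi (by linarith) hb hx.le (s := s - 1)
  have hFTC := integral_Ioi_of_hasDerivAt_of_tendsto'
    (fun t (ht : x ≤ t) => hasDerivAt_rpow_mul_exp_neg_mul s b (hx.trans_le ht).ne')
    ((hJ.const_mul s).sub (hI.const_mul b))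
    (by simpa [neg_mul] using tendsto_rpow_mul_exp_neg_mul_atTop_nhds_zero s b hb)
  rw [integral_sub (hJ.const_mul s) (hI.const_mul b), integral_const_mul,
    integral_const_mul] at hFTC
  linarith

lemma mul_integral_Ioi_rpow_sub_one_mul_exp_neg_mul_le {s b x : ℝ} (hs : 0 < s) (hb : 0 < b)
    (hx : 0 < x) :
    x * ∫ t in Ioi x, t ^ (s - 1) * exp (-(b * t)) ≤ ∫ t in Ioi x, t ^ s * exp (-(b * t)) := by
  rw [← integral_const_mul]
  refine setIntegral_mono_on
    ((integrableOn_rpow_mul_exp_neg_mul_Ioi (by linarith) hb hx.le).const_mul x)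
    (integrableOn_rpow_mul_exp_neg_mul_Ioi (by linarith) hb hx.le) measurableSet_Ioi
    fun t (ht : x < t) => ?_
  have ht0 : 0 < t := hx.trans ht
  calc x * (t ^ (s - 1) * exp (-(b * t))) ≤ t * (t ^ (s - 1) * exp (-(b * t))) := by
        gcongr
    _ = t ^ s * exp (-(b * t)) := by
        rw [← mul_assoc, mul_comm t, ← rpow_add_one ht0.ne', sub_add_cancel]

lemma div_le_integral_Ioi_rpow_mul_exp_neg_mul {s b x : ℝ} (hs : 0 < s) (hb : 0 < b)
    (hx : 0 < x) :
    x ^ s * exp (-(b * x)) / b ≤ ∫ t in Ioi x, t ^ s * exp (-(b * t)) := by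
  rw [div_le_iff₀ hb, mul_comm _ b, mul_integral_Ioi_rpow_mul_exp_neg_mul hs hb hx]
  have := setIntegral_nonneg_rpow_mul_exp_neg_mul (s - 1) b hx.le
  nlinarith

lemma integral_Ioi_rpow_mul_exp_neg_mul_le_div {s b x : ℝ} (hs : 0 < s) (hb : 0 < b)
    (hx : 0 < x) (hsx : s / x < b) :
    ∫ t in Ioi x, t ^ s * exp (-(b * t)) ≤ x ^ s * exp (-(b * x)) / (b - s / x) := by
  rw [le_div_iff₀ (sub_pos.2 hsx)]
  have hrec := mul_integral_Ioi_rpow_mul_exp_neg_mul hs hb hx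
  have hJ := mul_integral_Ioi_rpow_sub_one_mul_exp_neg_mul_le hs hb hx
  have hsJ : s * ∫ t in Ioi x, t ^ (s - 1) * exp (-(b * t)) ≤
      s / x * ∫ t in Ioi x, t ^ s * exp (-(b * t)) := by
    rw [div_mul_eq_mul_div, le_div_iff₀ hx, mul_right_comm, mul_assoc]
    exact mul_le_mul_of_nonneg_left hJ hs.le
  linarith

lemma toReal_gammaMeasure_Ici {a r x : ℝ} (ha : 0 < a) (hr : 0 < r) (hx : 0 ≤ x) :
    (gammaMeasure a r (Ici x)).toReal =
      r ^ a / Gamma a * ∫ t in Ioi x, t ^ (a - 1) * exp (-(r * t)) := by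
  calc (gammaMeasure a r (Ici x)).toReal = ∫ t in Ici x, gammaPDFReal a r t := by
        rw [gammaMeasure, withDensity_apply _ measurableSet_Ici]
        exact (integral_eq_lintegral_of_nonneg_ae
          (ae_of_all _ (gammaPDFReal_nonneg ha hr)) (by fun_prop)).symm
    _ = _ := by
        rw [integral_Ici_eq_integral_Ioi, ← integral_const_mul]
        refine setIntegral_congr_fun measurableSet_Ioi fun t (ht : x < t) => ?_
        rw [gammaPDFReal, if_pos (hx.trans ht.le), mul_assoc]

/-- Two-sided Mills-type bounds for the Gamma distribution (shape `α`, rate `β`):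
for `α > 1`, `β > 0`, `x > (α−1)/β`,
`β^{α−1} x^{α−1} e^{−βx}/Γ(α) ≤ P(X ≥ x) ≤ β^α x^{α−1} e^{−βx}/(Γ(α)(β − (α−1)/x))`. -/
theorem stmt11 (α β x : ℝ) (hα : 1 < α) (hβ : 0 < β) (hx : (α - 1) / β < x) :
    β ^ (α - 1) * x ^ (α - 1) * Real.exp (-β * x) / Real.Gamma α ≤
      (gammaMeasure α β {y | x ≤ y}).toReal ∧
    (gammaMeasure α β {y | x ≤ y}).toReal ≤
      β ^ α * x ^ (α - 1) * Real.exp (-β * x) /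
        (Real.Gamma α * (β - (α - 1) / x)) := by
  have hs : 0 < α - 1 := by linarith
  have hx0 : 0 < x := (div_pos hs hβ).trans hx
  have hsx : (α - 1) / x < β := by
    rw [div_lt_iff₀ hx0, mul_comm]
    exact (div_lt_iff₀ hβ).1 hx
  have hΓ : 0 < Gamma α := Gamma_pos_of_pos (by linarith)
  have hβα : β ^ α = β ^ (α - 1) * β := by
    rw [← rpow_add_one hβ.ne', sub_add_cancel]
  rw [show {y | x ≤ y} = Ici x from rfl, toReal_gammaMeasure_Ici (by linarith) hβ hx0.le,
    neg_mul]
  constructor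
  · calc β ^ (α - 1) * x ^ (α - 1) * exp (-(β * x)) / Gamma α
        = β ^ α / Gamma α * (x ^ (α - 1) * exp (-(β * x)) / β) := by
          rw [hβα]; field_simp
      _ ≤ _ := by gcongr; exact div_le_integral_Ioi_rpow_mul_exp_neg_mul hs hβ hx0
  · calc _ ≤ β ^ α / Gamma α * (x ^ (α - 1) * exp (-(β * x)) / (β - (α - 1) / x)) := by
          gcongr; exact integral_Ioi_rpow_mul_exp_neg_mul_le_div hs hβ hx0 hsx
      _ = _ := by field_simp
end
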